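/- For every integer k ≥ 2, the sum of the absolute values of the coefficients of P_k equals (2k−3)!! = 1·3·5···(2k−3). -/

import Mathlib

/-!
Substituting `X ↦ -iX` and dividing by `i ^ (k - 1)` turns `P_k` into the polynomial `Q_k` of
the recurrence `Q_{k+1} = (2k-1) X Q_k + (1 - X²) Q_k'`, whose coefficients are those of `P_k`
up to powers of `i`. On coefficients it reads
`[X^{n+1}] Q_{k+1} = (2k-1-n) [X^n] Q_k + (n+2) [X^{n+2}] Q_k`, and `2k-1-n ≥ 0` whenever
`[X^n] Q_k ≠ 0` because `deg Q_k < k`; so the coefficients of `Q_k` are nonnegative and the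
sum in question is `Q_k(1)`. At `X = 1` the derivative term vanishes, so
`Q_{k+1}(1) = (2k-1) Q_k(1)`.
-/

noncomputable section

open Polynomial

/-- The polynomials `P_k` defined by `P₁ = 1` and
`P_{k+1}(X) = (1-2k)·X·P_k(X) + (1+X²)·P_k'(X)` for `k ≥ 1`. -/
def P : ℕ → Polynomial ℝ
  | 0 => 0
  | 1 => 1
  | (k + 2) => C (1 - 2 * ((k : ℝ) + 1)) * X * P (k + 1)
      + (1 + X ^ 2) * derivative (P (k + 1))

open scoped Nat

namespace Polynomial

variable {R : Type*} [CommSemiring R]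

theorem coeff_X_mul_derivative (p : R[X]) (n : ℕ) :
    (X * derivative p).coeff n = n * p.coeff n := by
  cases n with
  | zero => simp
  | succ n => rw [coeff_X_mul, coeff_derivative]; push_cast; ring

theorem coeff_C_mul_X_mul_add_derivative_zero (a s : R) (p : R[X]) :
    (C a * X * p + (1 + C s * X ^ 2) * derivative p).coeff 0 = p.coeff 1 := by
  simp [mul_assoc, coeff_derivative]

theorem coeff_C_mul_X_mul_add_derivative_succ (a s : R) (p : R[X]) (n : ℕ) :
    (C a * X * p + (1 + C s * X ^ 2) * derivative p).coeff (n + 1)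
      = (a + s * n) * p.coeff n + (n + 2) * p.coeff (n + 2) := by
  rw [add_mul, one_mul, pow_two, mul_assoc, mul_assoc, mul_assoc, coeff_add, coeff_add,
    coeff_C_mul, coeff_C_mul, coeff_X_mul, coeff_X_mul, coeff_X_mul_derivative, coeff_derivative]
  push_cast
  ring

end Polynomial

/-- `Q k = i ^ (1 - k) • P k (-i X)`. -/
def Q : ℕ → ℝ[X]
  | 0 => 0
  | 1 => 1
  | (k + 2) => C (2 * ((k : ℝ) + 1) - 1) * X * Q (k + 1) + (1 - X ^ 2) * derivative (Q (k + 1))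

theorem P_add_two (k : ℕ) : P (k + 2) =
    C (1 - 2 * ((k : ℝ) + 1)) * X * P (k + 1) + (1 + C 1 * X ^ 2) * derivative (P (k + 1)) := by
  rw [C_1, one_mul, P]

theorem Q_add_two (k : ℕ) : Q (k + 2) =
    C (2 * ((k : ℝ) + 1) - 1) * X * Q (k + 1)
      + (1 + C (-1) * X ^ 2) * derivative (Q (k + 1)) := by
  rw [C_neg, C_1, neg_one_mul, ← sub_eq_add_neg, Q]

theorem P_coeff_zero (k : ℕ) : (P (k + 2)).coeff 0 = (P (k + 1)).coeff 1 := by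
  rw [P_add_two, coeff_C_mul_X_mul_add_derivative_zero]

theorem P_coeff_succ (k n : ℕ) : (P (k + 2)).coeff (n + 1)
    = (n - 2 * k - 1) * (P (k + 1)).coeff n + (n + 2) * (P (k + 1)).coeff (n + 2) := by
  rw [P_add_two, coeff_C_mul_X_mul_add_derivative_succ]
  ring

theorem Q_coeff_zero (k : ℕ) : (Q (k + 2)).coeff 0 = (Q (k + 1)).coeff 1 := by
  rw [Q_add_two, coeff_C_mul_X_mul_add_derivative_zero]

theorem Q_coeff_succ (k n : ℕ) : (Q (k + 2)).coeff (n + 1)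
    = (2 * k + 1 - n) * (Q (k + 1)).coeff n + (n + 2) * (Q (k + 1)).coeff (n + 2) := by
  rw [Q_add_two, coeff_C_mul_X_mul_add_derivative_succ]
  ring

theorem Q_coeff_eq_zero_of_le : ∀ {k n : ℕ}, k ≤ n → (Q k).coeff n = 0
  | 0, _, _ => by simp [Q]
  | 1, _, h => by simp [Q, coeff_one, Nat.one_le_iff_ne_zero.mp h]
  | k + 2, n + 1, h => by
    rw [Q_coeff_succ, Q_coeff_eq_zero_of_le (by omega), Q_coeff_eq_zero_of_le (by omega)]
    ring

theorem Q_natDegree_lt {k : ℕ} (hk : k ≠ 0) : (Q k).natDegree < k := by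
  obtain ⟨k, rfl⟩ := Nat.exists_eq_succ_of_ne_zero hk
  exact Nat.lt_succ_of_le <| natDegree_le_iff_coeff_eq_zero.mpr fun _ h ↦ Q_coeff_eq_zero_of_le h

theorem Q_coeff_nonneg : ∀ k n : ℕ, 0 ≤ (Q k).coeff n
  | 0, _ => by simp [Q]
  | 1, _ => by simp only [Q, coeff_one]; split_ifs <;> norm_num
  | k + 2, 0 => by rw [Q_coeff_zero]; exact Q_coeff_nonneg _ _
  | k + 2, n + 1 => by
    rw [Q_coeff_succ]
    refine add_nonneg ?_ (mul_nonneg (by positivity) (Q_coeff_nonneg _ _))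
    rcases le_or_gt (k + 1) n with h | h
    · rw [Q_coeff_eq_zero_of_le h, mul_zero]
    · have hn : (n : ℝ) ≤ k := by exact_mod_cast Nat.lt_succ_iff.mp h
      exact mul_nonneg (by linarith) (Q_coeff_nonneg _ _)

theorem Q_eval_one : ∀ k : ℕ, (Q (k + 2)).eval 1 = (2 * k + 1)‼
  | 0 => by norm_num [Q]
  | k + 1 => by
    rw [Q, show 2 * (k + 1) + 1 = 2 * k + 1 + 2 by ring, Nat.doubleFactorial_add_two,
      Nat.cast_mul, ← Q_eval_one k]
    simp only [eval_add, eval_mul, eval_sub, eval_pow, eval_C, eval_X, eval_one]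
    push_cast
    ring

open Complex in
theorem P_coeff_eq_I_pow_mul_Q_coeff : ∀ k n : ℕ,
    ((P (k + 1)).coeff n : ℂ) = I ^ (k + n) * (Q (k + 1)).coeff n
  | 0, n => by cases n <;> simp [P, Q, coeff_one]
  | k + 1, 0 => by
    rw [P_coeff_zero, Q_coeff_zero, P_coeff_eq_I_pow_mul_Q_coeff k 1]
  | k + 1, n + 1 => by
    rw [P_coeff_succ, Q_coeff_succ]
    push_cast
    rw [P_coeff_eq_I_pow_mul_Q_coeff k n, P_coeff_eq_I_pow_mul_Q_coeff k (n + 2)]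
    linear_combination ((n - 2 * k - 1) * I ^ (k + n) * (Q (k + 1)).coeff n) * I_sq

theorem P_coeff_abs (k n : ℕ) : |(P k).coeff n| = (Q k).coeff n := by
  cases k with
  | zero => simp [P, Q]
  | succ k =>
    rw [← Real.norm_eq_abs, ← Complex.norm_real, P_coeff_eq_I_pow_mul_Q_coeff, norm_mul,
      norm_pow, Complex.norm_I, one_pow, one_mul, Complex.norm_real, Real.norm_eq_abs,
      abs_of_nonneg (Q_coeff_nonneg _ _)]

/-- Lemma 2.1: for `k ≥ 2`, the sum of the absolute values of the coefficients of
`P_k` equals the double factorial `(2k-3)!! = 1·3·5···(2k-3)`. -/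
theorem P_coeff_abs_sum (k : ℕ) (hk : 2 ≤ k) :
    ∑ i ∈ Finset.range k, |(P k).coeff i| = (Nat.doubleFactorial (2 * k - 3) : ℝ) := by
  obtain ⟨k, rfl⟩ := Nat.exists_eq_add_of_le' hk
  calc ∑ i ∈ Finset.range (k + 2), |(P (k + 2)).coeff i|
      = ∑ i ∈ Finset.range (k + 2), (Q (k + 2)).coeff i * 1 ^ i := by simp [P_coeff_abs]
    _ = (Q (k + 2)).eval 1 := (eval_eq_sum_range' (Q_natDegree_lt (by omega)) 1).symm
    _ = (2 * k + 1)‼ := Q_eval_one k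
    _ = (2 * (k + 2) - 3)‼ := by rw [show 2 * (k + 2) - 3 = 2 * k + 1 by omega]
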